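/- arXiv:2107.01316 — 2 statements merged into one kernel-verified Lean document; each statement's English description precedes it below -/
import Mathlib

section
/- Let m ≥ 0 and n ≥ 0, let ε_2, …, ε_{m+2} ∈ {0,1}, and suppose ε_i = 1 exactly for the indices i_1 < i_2 < ⋯ < i_k among {2, …, m+1} (with k ≥ 0), and ε_i = 0 for all other i with 2 ≤ i ≤ m+1. If either (n ≡ 2^{m+1} (mod 2^{m+2}) and k is even) or (n ≡ 0 (mod 2^{m+2}) and k is odd), then: (a) P_{m,0}^{ε_2,…,ε_{m+2}}(n) is empty unless ε_{m+2} = 1, i.e., P_{m,0}^{ε_2,…,ε_{m+1},ε_{m+2}}(n) = P_{m,0}^{ε_2,…,ε_{m+1},1}(n); and (b) the composite σ ∘ τ_{i_1} ∘ τ_{i_2} ∘ ⋯ ∘ τ_{i_k} ∘ τ_{m+2} is a bijection from P_{m,0}^{ε_2,…,ε_{m+2}}(n) onto P_m((n − (k+1)·2^{m+1})/2). In particular |P_{m,0}^{ε_2,…,ε_{m+2}}(n)| = r_m((n − (k+1)·2^{m+1})/2). -/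
/-- The integer partitioned by the binary partition `α`, where `α i` is the
number of parts equal to `2 ^ i` (so `α i` is the `α_{i+1}` of the paper). -/
def binWeight (α : ℕ →₀ ℕ) : ℕ := α.sum fun i a => a * 2 ^ i

/-- `Pm m n` is the set of binary partitions of `n` satisfying the divisibility
conditions `2 ^ (m + 2 - i) ∣ α_i` for `1 ≤ i ≤ m + 1` (written here with the
index shifted down by one).  For `n < 0` the set is empty. -/
def Pm (m : ℕ) (n : ℤ) : Set (ℕ →₀ ℕ) :=
  {α | (binWeight α : ℤ) = n ∧ ∀ i ≤ m, 2 ^ (m + 1 - i) ∣ α i}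

/-- `r m n` is the number of binary partitions of `n` satisfying the divisibility
conditions `2 ^ (m + 2 - i) ∣ α_i` for `1 ≤ i ≤ m + 1`. -/
noncomputable def r (m : ℕ) (n : ℤ) : ℕ := Nat.card (Pm m n)

/-- `Pm0 m n ε` is the set `P_{m,0}^{ε₂,…,ε_{m+2}}(n)` of partitions in `Pm m n`
with `α₁ = 0` and `α_i ≡ ε_i · 2^(m+2-i) (mod 2^(m+3-i))` for `2 ≤ i ≤ m + 2`;
all indices (of both `α` and `ε`) are shifted down by one here, so the
congruences read `α i ≡ ε i · 2^(m+1-i) (mod 2^(m+2-i))` for `1 ≤ i ≤ m + 1`. -/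
def Pm0 (m : ℕ) (n : ℤ) (ε : ℕ → ℕ) : Set (ℕ →₀ ℕ) :=
  {α | α ∈ Pm m n ∧ α 0 = 0 ∧
    ∀ i, 1 ≤ i → i ≤ m + 1 → α i ≡ ε i * 2 ^ (m + 1 - i) [MOD 2 ^ (m + 2 - i)]}

/-- The map `σ` sending `(α₁, α₂, α₃, …)` to `(α₂, α₃, …)`. -/
noncomputable def sigmaShift (α : ℕ →₀ ℕ) : ℕ →₀ ℕ :=
  Finsupp.comapDomain Nat.succ α (Nat.succ_injective.injOn)

/-!
Write `c` for the partition with `c_i = ε_i · 2^(m+2-i)` for `2 ≤ i ≤ m+2`, so that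
`τ_{i₁} ∘ ⋯ ∘ τ_{i_k} ∘ τ_{m+2}` is `α ↦ α - c` once `ε_{m+2} = 1`. For `α` in `P_{m,0}^ε(n)` the
congruences say exactly that `c ≤ α` and that `α - c` has its `i`-th entry divisible by
`2^(m+3-i)`; shifting by `σ` turns these into the divisibility conditions of `P_m`, and halves the
weight. Hence `α ↦ σ (α - c)` is a bijection onto `P_m((n - |c|)/2)`, with inverse
`β ↦ σ⁻¹ β + c`, where `|c| = (k + ε_{m+2}) · 2^(m+1)`. Since every partition in `P_m` has weight
divisible by `2^(m+1)`, a nonempty `P_{m,0}^ε(n)` forces `n ≡ (k + ε_{m+2}) · 2^(m+1)` modulo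
`2^(m+2)`, and the parity hypothesis rules out `ε_{m+2} = 0`.
-/

open Finsupp

lemma binWeight_add (α β : ℕ →₀ ℕ) : binWeight (α + β) = binWeight α + binWeight β :=
  sum_add_index' (fun _ => zero_mul _) (fun _ _ _ => add_mul _ _ _)

lemma binWeight_single (i a : ℕ) : binWeight (single i a) = a * 2 ^ i :=
  sum_single_index (zero_mul _)

lemma binWeight_sum {ι : Type*} (s : Finset ι) (f : ι → ℕ →₀ ℕ) :
    binWeight (∑ i ∈ s, f i) = ∑ i ∈ s, binWeight (f i) :=
  (sum_finsetSum_index (fun _ => zero_mul _) (fun _ _ _ => add_mul _ _ _)).symm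

lemma binWeight_mapDomain_succ (β : ℕ →₀ ℕ) :
    binWeight (mapDomain Nat.succ β) = 2 * binWeight β := by
  rw [binWeight, sum_mapDomain_index (fun _ => zero_mul _) (fun _ _ _ => add_mul _ _ _),
    binWeight, mul_sum]
  exact sum_congr fun i _ => by rw [pow_succ]; ring

lemma two_pow_dvd_binWeight {m : ℕ} {β : ℕ →₀ ℕ} (hβ : ∀ i ≤ m, 2 ^ (m + 1 - i) ∣ β i) :
    2 ^ (m + 1) ∣ binWeight β :=
  Finset.dvd_sum fun i _ => by
    rcases le_or_gt i m with hi | hi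
    · rw [show 2 ^ (m + 1) = 2 ^ (m + 1 - i) * 2 ^ i by rw [← pow_add]; congr 1; omega]
      exact mul_dvd_mul (hβ i hi) dvd_rfl
    · exact dvd_mul_of_dvd_right (pow_dvd_pow 2 hi) _

lemma mul_two_pow_mod_two_pow_succ (k m : ℕ) :
    k * 2 ^ (m + 1) % 2 ^ (m + 2) = k % 2 * 2 ^ (m + 1) := by
  rw [pow_succ' 2 (m + 1), Nat.mul_mod_mul_right]

lemma sigmaShift_apply (α : ℕ →₀ ℕ) (i : ℕ) : sigmaShift α i = α (i + 1) :=
  comapDomain_apply _ _ _ _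

lemma mapDomain_succ_apply_zero (β : ℕ →₀ ℕ) : mapDomain Nat.succ β 0 = 0 :=
  mapDomain_of_notMem_range _ _ fun ⟨_, h⟩ => Nat.succ_ne_zero _ h

lemma mapDomain_succ_apply_succ (β : ℕ →₀ ℕ) (i : ℕ) : mapDomain Nat.succ β (i + 1) = β i :=
  mapDomain_apply Nat.succ_injective β i

lemma sigmaShift_mapDomain_succ (β : ℕ →₀ ℕ) : sigmaShift (mapDomain Nat.succ β) = β := by
  ext i
  rw [sigmaShift_apply, mapDomain_succ_apply_succ]

lemma mapDomain_succ_sigmaShift {α : ℕ →₀ ℕ} (h : α 0 = 0) :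
    mapDomain Nat.succ (sigmaShift α) = α := by
  ext (_ | i)
  · rw [h, mapDomain_succ_apply_zero]
  · rw [mapDomain_succ_apply_succ, sigmaShift_apply]

/-- The partition `c` above, with the indices shifted down by one as in `Pm0`. -/
noncomputable def residue (m : ℕ) (ε : ℕ → ℕ) : ℕ →₀ ℕ :=
  ∑ i ∈ Finset.Icc 1 (m + 1), single i (ε i * 2 ^ (m + 1 - i))

section Residue

variable {m : ℕ} {ε : ℕ → ℕ}

lemma residue_apply (i : ℕ) :
    residue m ε i = if i ∈ Finset.Icc 1 (m + 1) then ε i * 2 ^ (m + 1 - i) else 0 := by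
  simp only [residue, finsetSum_apply, single_apply]
  exact Finset.sum_ite_eq' _ _ _

lemma residue_apply_zero : residue m ε 0 = 0 := by
  simp [residue_apply]

lemma residue_apply_of_le {i : ℕ} (h1 : 1 ≤ i) (h2 : i ≤ m + 1) :
    residue m ε i = ε i * 2 ^ (m + 1 - i) := by
  rw [residue_apply, if_pos (Finset.mem_Icc.mpr ⟨h1, h2⟩)]

lemma residue_eq_single_add_sum {S : Finset ℕ}
    (hε : ∀ j, 1 ≤ j → j ≤ m + 1 → ε j = 0 ∨ ε j = 1) (hS : S ⊆ Finset.Icc 1 m)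
    (hSε : ∀ j, 1 ≤ j → j ≤ m → (ε j = 1 ↔ j ∈ S)) :
    residue m ε = single (m + 1) (ε (m + 1)) + ∑ j ∈ S, single j (2 ^ (m + 1 - j)) := by
  rw [residue, Finset.sum_Icc_succ_top (by omega), add_comm, Nat.sub_self, pow_zero, mul_one]
  congr 1
  calc ∑ i ∈ Finset.Icc 1 m, single i (ε i * 2 ^ (m + 1 - i))
      = ∑ i ∈ S, single i (ε i * 2 ^ (m + 1 - i)) := by
        refine (Finset.sum_subset hS fun i hi hiS => ?_).symm
        obtain ⟨h1, h2⟩ := Finset.mem_Icc.mp hi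
        have : ε i = 0 := (hε i h1 (by omega)).resolve_right fun h => hiS ((hSε i h1 h2).mp h)
        rw [this, zero_mul, single_zero]
    _ = ∑ i ∈ S, single i (2 ^ (m + 1 - i)) := by
        refine Finset.sum_congr rfl fun i hi => ?_
        obtain ⟨h1, h2⟩ := Finset.mem_Icc.mp (hS hi)
        rw [(hSε i h1 h2).mpr hi, one_mul]

lemma binWeight_single_add_sum (c : ℕ) {S : Finset ℕ} (hS : ∀ j ∈ S, j ≤ m + 1) :
    binWeight (single (m + 1) c + ∑ j ∈ S, single j (2 ^ (m + 1 - j))) =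
      (S.card + c) * 2 ^ (m + 1) := by
  rw [binWeight_add, binWeight_single, binWeight_sum,
    Finset.sum_congr rfl fun j hj => by
      rw [binWeight_single, ← pow_add, Nat.sub_add_cancel (hS j hj)],
    Finset.sum_const, smul_eq_mul]
  ring

end Residue

section Pm0

variable {m : ℕ} {n : ℤ} {ε : ℕ → ℕ} {α : ℕ →₀ ℕ}

lemma residue_le_of_mem_Pm0 (hε : ∀ i, 1 ≤ i → i ≤ m + 1 → ε i ≤ 1) (hα : α ∈ Pm0 m n ε) :
    residue m ε ≤ α := by
  refine le_def.mpr fun i => ?_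
  rw [residue_apply]
  split_ifs with hi
  · obtain ⟨h1, h2⟩ := Finset.mem_Icc.mp hi
    have hlt : ε i * 2 ^ (m + 1 - i) < 2 ^ (m + 2 - i) := by
      rw [show m + 2 - i = m + 1 - i + 1 by omega, pow_succ]
      have := hε i h1 h2
      have : 0 < 2 ^ (m + 1 - i) := by positivity
      nlinarith
    calc ε i * 2 ^ (m + 1 - i) = α i % 2 ^ (m + 2 - i) :=
          (Nat.mod_eq_of_lt hlt).symm.trans (hα.2.2 i h1 h2).symm
      _ ≤ α i := Nat.mod_le _ _
  · exact Nat.zero_le _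

lemma two_pow_dvd_sub_residue_apply (hε : ∀ i, 1 ≤ i → i ≤ m + 1 → ε i ≤ 1)
    (hα : α ∈ Pm0 m n ε) {i : ℕ} (h1 : 1 ≤ i) (h2 : i ≤ m + 1) :
    2 ^ (m + 2 - i) ∣ (α - residue m ε) i := by
  have hle := le_def.mp (residue_le_of_mem_Pm0 hε hα) i
  rw [residue_apply_of_le h1 h2] at hle
  rw [tsub_apply, residue_apply_of_le h1 h2]
  exact (Nat.modEq_iff_dvd' hle).mp (hα.2.2 i h1 h2).symm

lemma two_pow_dvd_sigmaShift_sub_residue (hε : ∀ i, 1 ≤ i → i ≤ m + 1 → ε i ≤ 1)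
    (hα : α ∈ Pm0 m n ε) {i : ℕ} (hi : i ≤ m) :
    2 ^ (m + 1 - i) ∣ sigmaShift (α - residue m ε) i := by
  have := two_pow_dvd_sub_residue_apply hε hα (i := i + 1) (by omega) (by omega)
  rwa [sigmaShift_apply, ← show m + 2 - (i + 1) = m + 1 - i by omega]

lemma mapDomain_succ_sigmaShift_sub_residue (hε : ∀ i, 1 ≤ i → i ≤ m + 1 → ε i ≤ 1)
    (hα : α ∈ Pm0 m n ε) :
    mapDomain Nat.succ (sigmaShift (α - residue m ε)) + residue m ε = α := by
  rw [mapDomain_succ_sigmaShift (by rw [tsub_apply, hα.2.1, zero_tsub]),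
    tsub_add_cancel_of_le (residue_le_of_mem_Pm0 hε hα)]

lemma binWeight_eq_of_mem_Pm0 (hε : ∀ i, 1 ≤ i → i ≤ m + 1 → ε i ≤ 1) (hα : α ∈ Pm0 m n ε) :
    binWeight α = 2 * binWeight (sigmaShift (α - residue m ε)) + binWeight (residue m ε) := by
  conv_lhs => rw [← mapDomain_succ_sigmaShift_sub_residue hε hα]
  rw [binWeight_add, binWeight_mapDomain_succ]

lemma binWeight_modEq_of_mem_Pm0 (hε : ∀ i, 1 ≤ i → i ≤ m + 1 → ε i ≤ 1)
    (hα : α ∈ Pm0 m n ε) : binWeight α ≡ binWeight (residue m ε) [MOD 2 ^ (m + 2)] := by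
  have hdvd : 2 ^ (m + 2) ∣ 2 * binWeight (sigmaShift (α - residue m ε)) := by
    rw [pow_succ' 2 (m + 1)]
    exact mul_dvd_mul_left 2
      (two_pow_dvd_binWeight fun i hi => two_pow_dvd_sigmaShift_sub_residue hε hα hi)
  rw [binWeight_eq_of_mem_Pm0 hε hα]
  simpa using (Nat.modEq_zero_iff_dvd.mpr hdvd).add_right (binWeight (residue m ε))

lemma mapDomain_succ_add_residue_mem_Pm0 {β : ℕ →₀ ℕ} (hβ : ∀ i ≤ m, 2 ^ (m + 1 - i) ∣ β i)
    (hn : 2 * (binWeight β : ℤ) + binWeight (residue m ε) = n) :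
    mapDomain Nat.succ β + residue m ε ∈ Pm0 m n ε := by
  refine ⟨⟨?_, fun i hi => ?_⟩, ?_, fun i h1 h2 => ?_⟩
  · rw [binWeight_add, binWeight_mapDomain_succ]
    push_cast
    exact hn
  · rcases i with _ | i
    · simp [mapDomain_succ_apply_zero, residue_apply_zero]
    · rw [Finsupp.add_apply, mapDomain_succ_apply_succ, residue_apply_of_le (by omega) (by omega)]
      exact dvd_add ((pow_dvd_pow 2 (by omega)).trans (hβ i (by omega))) (dvd_mul_left _ _)
  · rw [Finsupp.add_apply, mapDomain_succ_apply_zero, residue_apply_zero]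
  · obtain ⟨i, rfl⟩ : ∃ j, i = j + 1 := ⟨i - 1, by omega⟩
    have : 2 ^ (m + 2 - (i + 1)) ∣ β i := by
      rw [show m + 2 - (i + 1) = m + 1 - i by omega]
      exact hβ i (by omega)
    rw [Finsupp.add_apply, mapDomain_succ_apply_succ, residue_apply_of_le h1 h2]
    simpa using (Nat.modEq_zero_iff_dvd.mpr this).add_right (ε (i + 1) * 2 ^ (m + 1 - (i + 1)))

theorem bijOn_sigmaShift_sub_residue (hε : ∀ i, 1 ≤ i → i ≤ m + 1 → ε i ≤ 1)
    (hn : (2 : ℤ) ∣ n - binWeight (residue m ε)) :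
    Set.BijOn (fun α => sigmaShift (α - residue m ε)) (Pm0 m n ε)
      (Pm m ((n - binWeight (residue m ε)) / 2)) := by
  have hweight : ∀ β : ℕ →₀ ℕ, (binWeight β : ℤ) = (n - binWeight (residue m ε)) / 2 ↔
      2 * (binWeight β : ℤ) + binWeight (residue m ε) = n := fun β => by
    rw [eq_comm, Int.ediv_eq_iff_eq_mul_left two_ne_zero hn]
    constructor <;> intro h <;> linarith
  refine Set.InvOn.bijOn (f' := fun β => mapDomain Nat.succ β + residue m ε)
    ⟨fun α hα => mapDomain_succ_sigmaShift_sub_residue hε hα,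
      fun β _ => by simp only [add_tsub_cancel_right, sigmaShift_mapDomain_succ]⟩
    (fun α hα => ⟨?_, fun i hi => two_pow_dvd_sigmaShift_sub_residue hε hα hi⟩)
    (fun β hβ => mapDomain_succ_add_residue_mem_Pm0 hβ.2 ((hweight β).mp hβ.1))
  rw [hweight, ← hα.1.1, binWeight_eq_of_mem_Pm0 hε hα]
  push_cast
  rfl

end Pm0

/-- Lemma (odd/even case (1)): with the indices of `ε` shifted down by one (so
`ε j` here is the paper's `ε_{j+1}`), suppose `ε` takes values in `{0,1}` and
equals `1` on `{1, …, m}` exactly on the set `S` (the paper's `{i₁ < ⋯ < i_k}`),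
with `k = |S|`.  If `n ≡ 2^(m+1) (mod 2^(m+2))` and `k` is even, or
`n ≡ 0 (mod 2^(m+2))` and `k` is odd, then:
(a) `P_{m,0}^{ε}(n)` is empty unless `ε_{m+2} = 1`, and
(b) when `ε_{m+2} = 1`, the composite `σ ∘ τ_{i₁} ∘ ⋯ ∘ τ_{i_k} ∘ τ_{m+2}` (which
subtracts `2^(m+1-j)` from the entry at each `j ∈ S ∪ {m+1}` and then shifts) is
a bijection from `P_{m,0}^{ε}(n)` onto `P_m((n - (k+1)·2^(m+1))/2)`; in
particular `|P_{m,0}^{ε}(n)| = r_m((n - (k+1)·2^(m+1))/2)`. -/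
theorem stmt9 (m n : ℕ) (ε : ℕ → ℕ)
    (hε : ∀ j, 1 ≤ j → j ≤ m + 1 → ε j = 0 ∨ ε j = 1)
    (S : Finset ℕ) (hS : S ⊆ Finset.Icc 1 m)
    (hSε : ∀ j, 1 ≤ j → j ≤ m → (ε j = 1 ↔ j ∈ S))
    (k : ℕ) (hk : k = S.card)
    (h : (n % 2 ^ (m + 2) = 2 ^ (m + 1) ∧ Even k) ∨
         (n % 2 ^ (m + 2) = 0 ∧ Odd k)) :
    (ε (m + 1) = 0 → Pm0 m n ε = ∅) ∧
    (ε (m + 1) = 1 →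
      Set.BijOn
        (fun α : ℕ →₀ ℕ => sigmaShift
          (α - (Finsupp.single (m + 1) 1 +
            ∑ j ∈ S, Finsupp.single j (2 ^ (m + 1 - j)))))
        (Pm0 m n ε) (Pm m (((n : ℤ) - (k + 1) * 2 ^ (m + 1)) / 2)) ∧
      Nat.card (Pm0 m n ε) = r m (((n : ℤ) - (k + 1) * 2 ^ (m + 1)) / 2)) := by
  have hε' : ∀ j, 1 ≤ j → j ≤ m + 1 → ε j ≤ 1 := fun j h1 h2 => by
    rcases hε j h1 h2 with h | h <;> omega
  have hres := residue_eq_single_add_sum hε hS hSε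
  have hweight : binWeight (residue m ε) = (k + ε (m + 1)) * 2 ^ (m + 1) := by
    rw [hres, binWeight_single_add_sum _ fun j hj => (Finset.mem_Icc.mp (hS hj)).2.trans m.le_succ,
      hk]
  have hpos : 0 < 2 ^ (m + 1) := by positivity
  refine ⟨fun hεm => Set.eq_empty_of_forall_notMem fun α hα => ?_, fun hεm => ?_⟩
  · have hmod : n % 2 ^ (m + 2) = k % 2 * 2 ^ (m + 1) := by
      have := binWeight_modEq_of_mem_Pm0 hε' hα
      rwa [hweight, hεm, add_zero, Nat.cast_inj.mp hα.1.1, Nat.ModEq,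
        mul_two_pow_mod_two_pow_succ] at this
    rcases h with ⟨hn, hk⟩ | ⟨hn, hk⟩
    · rw [hn, Nat.even_iff.mp hk, zero_mul] at hmod
      exact hpos.ne' hmod
    · rw [hn, Nat.odd_iff.mp hk, one_mul] at hmod
      exact hpos.ne hmod
  · have hn : 2 ∣ n := (Nat.dvd_mod_iff (dvd_pow_self 2 (Nat.succ_ne_zero (m + 1)))).mp <| by
      rcases h with ⟨hmod, -⟩ | ⟨hmod, -⟩ <;> rw [hmod]
      exacts [dvd_pow_self 2 (by omega), dvd_zero 2]
    have hbij := bijOn_sigmaShift_sub_residue (n := n) hε' <| by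
      rw [hweight]
      exact dvd_sub (Int.natCast_dvd_natCast.mpr hn)
        (Int.natCast_dvd_natCast.mpr (dvd_mul_of_dvd_right (dvd_pow_self 2 (by omega)) _))
    rw [hweight, hres, hεm] at hbij
    push_cast at hbij
    exact ⟨hbij, Nat.card_congr (hbij.equiv _)⟩
end

section
/- Define S_m(n) = Σ_{k=0}^{n/2^{m+1}} r_{m-1}(2^m·k) for m ≥ 1 and n ≡ 0 (mod 2^{m+1}). Then S_m satisfies the same recursion as r_m: for every integer n' ≥ 0, S_m(2^{m+2}·n' + 2^{m+1}) = S_m(2^{m+2}·n') + Σ_{j=0}^{⌊m/2⌋} C(m+1, 2j+1) · S_m((2^{m+2}·n' + 2^{m+1} − (2j+1)·2^{m+1})/2). -/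
/-- `S m x = Σ_{k=0}^{x/2^(m+1)} r_{m-1}(2^m k)` when `x` is a nonnegative
multiple of `2^(m+1)`, and `S m x = 0` otherwise. -/
noncomputable def S (m : ℕ) (x : ℤ) : ℕ :=
  if 0 ≤ x ∧ (2 : ℤ) ^ (m + 1) ∣ x then
    ∑ k ∈ Finset.range ((x / 2 ^ (m + 1)).toNat + 1), r (m - 1) (2 ^ m * (k : ℤ))
  else 0

open Finset

lemma binWeight_eq_weight (α : ℕ →₀ ℕ) : binWeight α = Finsupp.weight (2 ^ ·) α := rfl

lemma apply_le_binWeight (α : ℕ →₀ ℕ) (i : ℕ) : α i ≤ binWeight α :=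
  Finsupp.le_weight _ (pow_ne_zero i two_ne_zero) α

lemma two_pow_le_binWeight {α : ℕ →₀ ℕ} {i : ℕ} (hi : α i ≠ 0) : 2 ^ i ≤ binWeight α :=
  Finsupp.le_weight_of_ne_zero' (2 ^ ·) hi

theorem finite_binWeight_le (n : ℕ) : {β : ℕ →₀ ℕ | binWeight β ≤ n}.Finite := by
  refine (Set.finite_Iic (∑ i ∈ range (n + 1), Finsupp.single i n)).subset fun β hβ i => ?_
  simp only [Finsupp.coe_finsetSum, Finset.sum_apply, Finsupp.single_apply, sum_ite_eq',
    mem_range]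
  split_ifs with hi
  · exact (apply_le_binWeight β i).trans hβ
  · rw [Set.mem_ofPred_eq] at hβ
    by_contra h
    have := two_pow_le_binWeight (i := i) (α := β) (by omega)
    have := Nat.lt_two_pow_self (n := i)
    omega

noncomputable def natCons (c : ℕ) (β : ℕ →₀ ℕ) : ℕ →₀ ℕ :=
  Finsupp.single 0 c + β.mapDomain Nat.succ

@[simp] lemma natCons_zero (c : ℕ) (β : ℕ →₀ ℕ) : natCons c β 0 = c := by
  simp [natCons, Finsupp.mapDomain_of_notMem_range]

@[simp] lemma natCons_succ (c : ℕ) (β : ℕ →₀ ℕ) (i : ℕ) : natCons c β (i + 1) = β i := by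
  simp [natCons, Finsupp.mapDomain_apply Nat.succ_injective]

lemma binWeight_natCons (c : ℕ) (β : ℕ →₀ ℕ) :
    binWeight (natCons c β) = c + 2 * binWeight β := by
  rw [binWeight_eq_weight, natCons, map_add, Finsupp.weight_single, pow_zero, smul_eq_mul, mul_one,
    Finsupp.mapDomain, map_finsuppSum, binWeight, Finsupp.mul_sum]
  refine congrArg (c + ·) (Finsupp.sum_congr fun i _ => ?_)
  rw [Finsupp.weight_single, smul_eq_mul, Nat.succ_eq_add_one, pow_succ]
  ring

noncomputable def natTail (α : ℕ →₀ ℕ) : ℕ →₀ ℕ :=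
  α.comapDomain Nat.succ Nat.succ_injective.injOn

@[simp] lemma natTail_apply (α : ℕ →₀ ℕ) (i : ℕ) : natTail α i = α (i + 1) := rfl

@[simp] lemma natTail_natCons (c : ℕ) (β : ℕ →₀ ℕ) : natTail (natCons c β) = β := by
  ext i; simp

@[simp] lemma natCons_natTail (α : ℕ →₀ ℕ) : natCons (α 0) (natTail α) = α := by
  ext (_ | i) <;> simp

lemma binWeight_eq_add_natTail (α : ℕ →₀ ℕ) : binWeight α = α 0 + 2 * binWeight (natTail α) := by
  rw [← binWeight_natCons, natCons_natTail]

theorem Nat.card_subtype_prod_eq_sum {E Y : Type*} [Fintype E] (p : E → Y → Prop)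
    [∀ e, Finite {y // p e y}] :
    Nat.card {q : E × Y // p q.1 q.2} = ∑ e, Nat.card {y // p e y} := by
  rw [Nat.card_congr (Equiv.subtypeProdEquivSigmaSubtype p), Nat.card_sigma]

theorem Nat.card_subtype_nat_prod_eq_sum {Y : Type*} (p : ℕ → Y → Prop) (n : ℕ)
    (hp : ∀ c y, p c y → c ≤ n) [∀ c, Finite {y // p c y}] :
    Nat.card {q : ℕ × Y // p q.1 q.2} = ∑ c ∈ range (n + 1), Nat.card {y // p c y} := by
  let e : {q : ℕ × Y // p q.1 q.2} ≃ {q : Fin (n + 1) × Y // p q.1 q.2} :=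
    { toFun q := ⟨(⟨q.1.1, Nat.lt_succ_of_le (hp _ _ q.2)⟩, q.1.2), q.2⟩
      invFun q := ⟨(q.1.1, q.1.2), q.2⟩ }
  rw [Nat.card_congr e, Nat.card_subtype_prod_eq_sum (fun (c : Fin (n + 1)) => p c),
    Fin.sum_univ_eq_sum_range (fun c => Nat.card {y // p c y})]

/-- The index is an integer so that negative weights give the empty set: no truncated subtraction
arises in the recursions below. -/
def tupleBinParts (a : ℕ) (n : ℤ) : Set ((Fin a → ℕ) × (ℕ →₀ ℕ)) :=
  {p | ((∑ i, p.1 i + binWeight p.2 : ℕ) : ℤ) = n}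

noncomputable def tupleBinCount (a : ℕ) (n : ℤ) : ℕ := Nat.card (tupleBinParts a n)

theorem finite_sum_add_binWeight_le (a n : ℕ) :
    {p : (Fin a → ℕ) × (ℕ →₀ ℕ) | ∑ i, p.1 i + binWeight p.2 ≤ n}.Finite := by
  refine ((Set.finite_Iic fun _ => n).prod (finite_binWeight_le n)).subset fun p hp => ?_
  rw [Set.mem_ofPred_eq] at hp
  refine ⟨fun i => ?_, (?_ : binWeight p.2 ≤ n)⟩
  · have := single_le_sum (fun j _ => Nat.zero_le (p.1 j)) (mem_univ i)
    dsimp only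
    omega
  · omega

instance (a : ℕ) (n : ℤ) : Finite (tupleBinParts a n) :=
  ((finite_sum_add_binWeight_le a n.toNat).subset fun p (hp : _ = n) => by
    rw [Set.mem_ofPred_eq]; omega).to_subtype

lemma tupleBinCount_of_neg (a : ℕ) {n : ℤ} (hn : n < 0) : tupleBinCount a n = 0 := by
  rw [tupleBinCount, Nat.card_eq_zero]
  left
  exact ⟨fun ⟨p, (hp : _ = n)⟩ => by omega⟩

theorem tupleBinCount_succ (a n : ℕ) :
    tupleBinCount (a + 1) n = ∑ k ∈ range (n + 1), tupleBinCount a k := by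
  let e : tupleBinParts (a + 1) n ≃ {q : ℕ × ((Fin a → ℕ) × (ℕ →₀ ℕ)) //
      q.2 ∈ tupleBinParts a (n - q.1)} :=
    (((Fin.consEquiv fun _ => ℕ).symm.prodCongr (Equiv.refl _)).trans
      (Equiv.prodAssoc _ _ _)).subtypeEquiv fun p => by
        simp [tupleBinParts, Fin.sum_univ_succ, Fin.consEquiv, Fin.tail]
        omega
  rw [tupleBinCount, Nat.card_congr e,
    Nat.card_subtype_nat_prod_eq_sum (fun c y => y ∈ tupleBinParts a (n - c)) n
      fun c y (hy : _ = _) => by omega, ← sum_range_reflect]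
  refine sum_congr rfl fun c hc => ?_
  rw [mem_range] at hc
  rw [tupleBinCount, Nat.add_sub_cancel, Nat.cast_sub (by omega), sub_sub_cancel]

/-- `Pm` reindexed so as to allow `j = 0` (no divisibility constraint), the base case of
`card_divParts`. -/
def divParts (j : ℕ) (n : ℤ) : Set (ℕ →₀ ℕ) :=
  {α | (binWeight α : ℤ) = n ∧ ∀ i < j, 2 ^ (j - i) ∣ α i}

lemma Pm_eq_divParts (m : ℕ) : Pm m = divParts (m + 1) := by
  ext n α
  simp [Pm, divParts]

instance (j : ℕ) (n : ℤ) : Finite (divParts j n) :=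
  ((finite_binWeight_le n.toNat).subset fun α (hα : _ ∧ _) => by
    rw [Set.mem_ofPred_eq]; omega).to_subtype

lemma natCons_mem_divParts_succ_iff (j k x : ℕ) (γ : ℕ →₀ ℕ) :
    natCons (2 ^ (j + 1) * x) γ ∈ divParts (j + 1) (2 ^ (j + 1) * k) ↔
      γ ∈ divParts j (2 ^ j * (k - x)) := by
  simp only [divParts, Set.mem_ofPred_eq, binWeight_natCons, Nat.forall_lt_succ_left,
    natCons_zero, natCons_succ, Nat.add_sub_add_right, Nat.sub_zero, dvd_mul_right, true_and]
  push_cast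
  refine and_congr_left' ⟨fun hw => ?_, fun hw => ?_⟩
  · exact mul_left_cancel₀ two_ne_zero (by linear_combination hw)
  · linear_combination 2 * hw

noncomputable def divPartsSuccEquiv (j k : ℕ) : divParts (j + 1) (2 ^ (j + 1) * k) ≃
    {q : ℕ × (ℕ →₀ ℕ) // q.2 ∈ divParts j (2 ^ j * (k - q.1))} where
  toFun α := ⟨(α.1 0 / 2 ^ (j + 1), natTail α), by
    obtain ⟨α, hα⟩ := α
    have h0 : 2 ^ (j + 1) ∣ α 0 := hα.2 0 j.succ_pos
    rwa [← natCons_natTail α, ← Nat.mul_div_cancel' h0, natCons_mem_divParts_succ_iff] at hα⟩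
  invFun q := ⟨natCons (2 ^ (j + 1) * q.1.1) q.1.2, (natCons_mem_divParts_succ_iff ..).2 q.2⟩
  left_inv α := Subtype.ext <| by
    have h0 : 2 ^ (j + 1) ∣ α.1 0 := α.2.2 0 j.succ_pos
    simp [Nat.mul_div_cancel' h0]
  right_inv q := by ext <;> simp

theorem card_divParts_succ (j k : ℕ) :
    Nat.card (divParts (j + 1) (2 ^ (j + 1) * k)) =
      ∑ x ∈ range (k + 1), Nat.card (divParts j (2 ^ j * (k - x))) := by
  refine (Nat.card_congr (divPartsSuccEquiv j k)).trans <|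
    Nat.card_subtype_nat_prod_eq_sum (fun x γ => γ ∈ divParts j (2 ^ j * (k - x))) k
      fun x γ hγ => ?_
  have hw : (0 : ℤ) ≤ 2 ^ j * (k - x) := hγ.1 ▸ Int.natCast_nonneg _
  have := nonneg_of_mul_nonneg_right hw (by positivity)
  omega

theorem card_divParts (j k : ℕ) : Nat.card (divParts j (2 ^ j * k)) = tupleBinCount j k := by
  induction j generalizing k with
  | zero =>
    refine Nat.card_congr <| (Equiv.uniqueProd _ _).symm.subtypeEquiv fun α => ?_
    simp [divParts, tupleBinParts]
  | succ j ih =>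
    rw [card_divParts_succ, tupleBinCount_succ, ← sum_range_reflect]
    refine sum_congr rfl fun x hx => ?_
    rw [mem_range] at hx
    rw [Nat.add_sub_cancel, Nat.cast_sub (by omega), sub_sub_cancel, ih]

theorem r_two_pow_mul (m k : ℕ) : r m (2 ^ (m + 1) * k) = tupleBinCount (m + 1) k := by
  rw [r, Pm_eq_divParts, card_divParts]

theorem S_two_pow_mul {m : ℕ} (hm : 1 ≤ m) (z : ℤ) :
    S m (2 ^ (m + 1) * z) = tupleBinCount (m + 1) z := by
  obtain ⟨m, rfl⟩ := Nat.exists_eq_add_of_le' hm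
  rcases le_or_gt 0 z with hz | hz
  · lift z to ℕ using hz
    rw [S, if_pos ⟨by positivity, dvd_mul_right _ _⟩, Int.mul_ediv_cancel_left _ (by positivity),
      Int.toNat_natCast, tupleBinCount_succ]
    exact sum_congr rfl fun k _ => r_two_pow_mul m k
  · rw [S, if_neg fun h => (mul_neg_of_pos_of_neg (by positivity) hz).not_ge h.1,
      tupleBinCount_of_neg _ hz]

def parityEquiv (ι : Type*) [Fintype ι] [DecidableEq ι] : (ι → ℕ) ≃ Finset ι × (ι → ℕ) where
  toFun v := (({i | v i % 2 = 1} : Finset ι), fun i => v i / 2)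
  invFun q i := (if i ∈ q.1 then 1 else 0) + 2 * q.2 i
  left_inv v := by
    funext i
    by_cases h : v i % 2 = 1 <;> simp [h] <;> omega
  right_inv q := by
    ext i
    · by_cases h : i ∈ q.1 <;> simp [h]
    · dsimp only
      split_ifs <;> omega

lemma sum_eq_card_add_two_mul_sum {ι : Type*} [Fintype ι] [DecidableEq ι] (v : ι → ℕ) :
    ∑ i, v i = #(parityEquiv ι v).1 + 2 * ∑ i, (parityEquiv ι v).2 i := by
  simp only [parityEquiv, Equiv.coe_fn_mk, card_filter, mul_sum, ← sum_add_distrib]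
  refine sum_congr rfl fun i _ => ?_
  split_ifs <;> omega

lemma sum_ite_card_eq {a : ℕ} {M : Type*} [AddCommMonoid M] (k : ℕ) (x : M) :
    ∑ e : Finset (Fin a), (if #e = k then x else 0) = a.choose k • x := by
  have : ({e | #e = k} : Finset (Finset (Fin a))) = powersetCard k univ := by
    ext e; simp [mem_powersetCard]
  rw [← sum_filter, sum_const, this, card_powersetCard, card_univ, Fintype.card_fin]

noncomputable def tupleBinPartsEquiv (m : ℕ) (N : ℤ) : tupleBinParts m N ≃
    {q : (Fin (m + 1) → ℕ) × (ℕ →₀ ℕ) // ((∑ i, q.1 i + 2 * binWeight q.2 : ℕ) : ℤ) = N} :=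
  Equiv.subtypeEquiv
    { toFun p := (Fin.cons (p.2 0) p.1, natTail p.2)
      invFun q := (Fin.tail q.1, natCons (q.1 0) q.2)
      left_inv p := by simp
      right_inv q := by simp }
    fun p => by
      simp only [tupleBinParts, Set.mem_ofPred_eq, Equiv.coe_fn_mk, Fin.sum_univ_succ,
        Fin.cons_zero, Fin.cons_succ, binWeight_eq_add_natTail p.2]
      push_cast
      omega

lemma card_odd_fiber (a : ℕ) (c : ℕ) (n : ℤ) (hc : c ≤ a) :
    Nat.card {p : (Fin a → ℕ) × (ℕ →₀ ℕ) //
        (c : ℤ) + 2 * ((∑ i, p.1 i + binWeight p.2 : ℕ) : ℤ) = 2 * n + 1} =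
      ∑ j ∈ range ((a - 1) / 2 + 1), if c = 2 * j + 1 then tupleBinCount a (n - j) else 0 := by
  rcases Nat.even_or_odd c with ⟨j, rfl⟩ | ⟨j, rfl⟩
  · rw [sum_eq_zero fun i _ => if_neg (by omega), Nat.card_eq_zero]
    exact .inl ⟨fun ⟨p, hp⟩ => by omega⟩
  · rw [sum_eq_single_of_mem j (mem_range.2 (by omega)) fun i _ hi => if_neg (by omega), if_pos rfl]
    exact Nat.card_congr <| Equiv.subtypeEquivRight fun p => by
      change _ ↔ _ = _
      omega

theorem card_sum_add_two_mul_binWeight_odd (a : ℕ) (n : ℤ) :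
    Nat.card {q : (Fin a → ℕ) × (ℕ →₀ ℕ) //
        ((∑ i, q.1 i + 2 * binWeight q.2 : ℕ) : ℤ) = 2 * n + 1} =
      ∑ j ∈ range ((a - 1) / 2 + 1), a.choose (2 * j + 1) * tupleBinCount a (n - j) := by
  let e : {q : (Fin a → ℕ) × (ℕ →₀ ℕ) // ((∑ i, q.1 i + 2 * binWeight q.2 : ℕ) : ℤ) = 2 * n + 1} ≃
      {q : Finset (Fin a) × ((Fin a → ℕ) × (ℕ →₀ ℕ)) //
        (#q.1 : ℤ) + 2 * ((∑ i, q.2.1 i + binWeight q.2.2 : ℕ) : ℤ) = 2 * n + 1} :=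
    (((parityEquiv _).prodCongr (Equiv.refl _)).trans (Equiv.prodAssoc _ _ _)).subtypeEquiv
      fun q => by
        simp only [Equiv.trans_apply, Equiv.prodCongr_apply, Prod.map, Equiv.prodAssoc_apply,
          Equiv.refl_apply, sum_eq_card_add_two_mul_sum q.1]
        push_cast
        omega
  have hfin (s : Finset (Fin a)) : Finite {p : (Fin a → ℕ) × (ℕ →₀ ℕ) //
      (#s : ℤ) + 2 * ((∑ i, p.1 i + binWeight p.2 : ℕ) : ℤ) = 2 * n + 1} :=
    ((finite_sum_add_binWeight_le a n.toNat).subset fun p (hp : _ = _) => by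
      rw [Set.mem_ofPred_eq]; omega).to_subtype
  rw [Nat.card_congr e, @Nat.card_subtype_prod_eq_sum _ _ _ _ hfin,
    sum_congr rfl fun s _ => card_odd_fiber a #s n ((card_le_univ s).trans_eq (Fintype.card_fin a)),
    sum_comm]
  exact sum_congr rfl fun j _ => sum_ite_card_eq _ _

theorem tupleBinCount_odd (m : ℕ) (n : ℤ) :
    tupleBinCount m (2 * n + 1) =
      ∑ j ∈ range (m / 2 + 1), (m + 1).choose (2 * j + 1) * tupleBinCount (m + 1) (n - j) := by
  rw [tupleBinCount, Nat.card_congr (tupleBinPartsEquiv m _),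
    card_sum_add_two_mul_binWeight_odd, Nat.add_sub_cancel]

theorem stmt17 (m : ℕ) (hm : 1 ≤ m) (n' : ℕ) :
    S m (2 ^ (m + 2) * n' + 2 ^ (m + 1)) =
      S m (2 ^ (m + 2) * n') +
        ∑ j ∈ Finset.range (m / 2 + 1),
          (m + 1).choose (2 * j + 1) *
            S m ((2 ^ (m + 2) * (n' : ℤ) + 2 ^ (m + 1) - (2 * j + 1) * 2 ^ (m + 1)) / 2) := by
  have hodd : 2 ^ (m + 2) * (n' : ℤ) + 2 ^ (m + 1) = 2 ^ (m + 1) * ((2 * n' + 1 : ℕ) : ℤ) := by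
    push_cast; ring
  have heven : 2 ^ (m + 2) * (n' : ℤ) = 2 ^ (m + 1) * ((2 * n' : ℕ) : ℤ) := by
    push_cast; ring
  have hhalf (j : ℕ) : (2 ^ (m + 2) * (n' : ℤ) + 2 ^ (m + 1) - (2 * j + 1) * 2 ^ (m + 1)) / 2 =
      2 ^ (m + 1) * (n' - j) := by
    rw [show 2 ^ (m + 2) * (n' : ℤ) + 2 ^ (m + 1) - (2 * j + 1) * 2 ^ (m + 1) =
      2 * (2 ^ (m + 1) * (n' - j)) by ring, Int.mul_ediv_cancel_left _ two_ne_zero]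
  simp_rw [hhalf, hodd, heven, S_two_pow_mul hm]
  rw [tupleBinCount_succ, sum_range_succ, ← tupleBinCount_succ, Nat.cast_add_one, Nat.cast_mul,
    Nat.cast_two, tupleBinCount_odd]
end
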